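/- Let m ≥ 1 and n ≥ 4 be integers. The number of spanning trees of the join K_m ∨ P_n equals ((m+n)^{m−1} / (2^n · √(m²+4m))) · ((m+2+√(m²+4m))^n − (m+2−√(m²+4m))^n), where the right-hand side is a real-number expression whose value is this natural number. Equivalently, the determinant of the matrix obtained from the Laplacian L(K_m ∨ P_n) by deleting one row and the corresponding column equals this quantity. -/

import Mathlib

open Matrix SimpleGraph

/-- The join of two simple graphs on disjoint vertex sets. -/
def graphJoin {α β : Type*} (G : SimpleGraph α) (H : SimpleGraph β) :
    SimpleGraph (α ⊕ β) where
  Adj x y :=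
    match x, y with
    | Sum.inl a, Sum.inl b => G.Adj a b
    | Sum.inr a, Sum.inr b => H.Adj a b
    | _, _ => True
  symm := by
    constructor
    rintro (a | a) (b | b) h
    · exact SimpleGraph.Adj.symm h
    · trivial
    · trivial
    · exact SimpleGraph.Adj.symm h
  loopless := by
    constructor
    rintro (a | a) h
    · exact G.irrefl h
    · exact H.irrefl h

instance graphJoin.adjDecidable {α β : Type*} (G : SimpleGraph α) (H : SimpleGraph β)
    [DecidableRel G.Adj] [DecidableRel H.Adj] :
    DecidableRel (graphJoin G H).Adj := fun x y =>
  match x, y with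
  | Sum.inl a, Sum.inl b => (inferInstance : Decidable (G.Adj a b))
  | Sum.inr a, Sum.inr b => (inferInstance : Decidable (H.Adj a b))
  | Sum.inl _, Sum.inr _ => Decidable.isTrue trivial
  | Sum.inr _, Sum.inl _ => Decidable.isTrue trivial

instance pathGraph.adjDecidable (n : ℕ) : DecidableRel (pathGraph n).Adj := fun _ _ =>
  decidable_of_iff _ pathGraph_adj.symm

/-!
For a Laplacian `L` on `N` vertices and the all-ones matrix `J`, every principal cofactor `τ`
of `L` satisfies `det (L + J) = N² τ`. For `K_m ∨ P_n` the matrix `L + J` is block diagonal,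
with blocks `(m + n) I` and `D + J`, where `D = L(P_n) + m I` has constant row sums `m`; hence
`m det (D + J) = (m + n) det D`. Expanding the tridiagonal `D` along its first row gives
`det D = m U_n(m + 2)` for the Lucas sequence `U_0 = 0, U_1 = 1, U_{k+2} = P U_{k+1} - U_k`,
whose Binet formula with `√(P² - 4) = √(m² + 4m)` is the closed form.
-/

def lucasU {R : Type*} [CommRing R] (P : R) : ℕ → R
  | 0 => 0
  | 1 => 1
  | k + 2 => P * lucasU P (k + 1) - lucasU P k

theorem two_pow_mul_mul_lucasU {R : Type*} [CommRing R] {P s : R} (hs : s ^ 2 = P ^ 2 - 4)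
    (k : ℕ) : 2 ^ k * s * lucasU P k = (P + s) ^ k - (P - s) ^ k := by
  induction k using Nat.twoStepInduction with
  | zero => simp [lucasU]
  | one => simp [lucasU]; ring
  | more k ih₁ ih₂ =>
    rw [lucasU]
    linear_combination 2 * P * ih₂ - 4 * ih₁ + ((P - s) ^ k - (P + s) ^ k) * hs

theorem map_lucasU {R S : Type*} [CommRing R] [CommRing S] (f : R →+* S) (P : R) (k : ℕ) :
    f (lucasU P k) = lucasU (f P) k := by
  induction k using Nat.twoStepInduction with
  | zero => simp [lucasU]
  | one => simp [lucasU]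
  | more k ih₁ ih₂ => simp [lucasU, ih₁, ih₂]

namespace Matrix

variable {ι R : Type*} [Fintype ι] [DecidableEq ι] [CommRing R]

theorem det_eq_mul_det_updateCol_of_mulVec_one {M : Matrix ι ι R} {s : R} {v : ι → R}
    (hM : M *ᵥ (fun _ => 1) = s • v) (j : ι) : M.det = s * (M.updateCol j v).det := by
  have h := det_updateCol_sum M j fun _ => 1
  simp only [one_smul] at h
  have hsum : (fun k => ∑ i, M k i) = s • v := by
    rw [← hM]; ext; simp [mulVec, dotProduct]
  rw [← h, hsum, det_updateCol_smul]

theorem det_updateCol_add_ones (M : Matrix ι ι R) (j : ι) :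
    ((M + of fun _ _ => 1).updateCol j fun _ => 1).det = (M.updateCol j fun _ => 1).det := by
  -- subtracting the all-ones column `j` from every other column is a unipotent column operation
  have h : (M + of fun _ _ => 1).updateCol j (fun _ => 1) = M.updateCol j (fun _ => 1) *
      (1 + replicateCol Unit (Pi.single j (1 : R)) *
        replicateRow Unit (1 - Pi.single j 1 : ι → R)) := by
    ext i k
    by_cases hk : k = j
    · subst hk; simp [mul_apply, Matrix.one_apply]
    · simp [mul_add, mul_apply, Matrix.one_apply, hk, updateCol_apply, Pi.single_apply,
        Finset.sum_add_distrib]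
  rw [h, det_mul, det_one_add_replicateCol_mul_replicateRow]
  simp

theorem det_updateRow_single_eq_det_submatrix (M : Matrix ι ι R) (u : ι) :
    (M.updateRow u (Pi.single u 1)).det =
      (M.submatrix (↑) (↑) : Matrix {v // v ≠ u} {v // v ≠ u} R).det := by
  set Y := (M.updateRow u (Pi.single u 1)).submatrix (Equiv.sumCompl (· ≠ u))
    (Equiv.sumCompl (· ≠ u))
  have h₁₁ : Y.toBlocks₁₁ = M.submatrix (↑) (↑) := by
    ext i j
    simp [Y, toBlocks₁₁, updateRow_ne i.2]
  have h₂₁ : Y.toBlocks₂₁ = 0 := by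
    ext i j
    have hi : (i : ι) = u := not_not.mp i.2
    simp [Y, toBlocks₂₁, hi, j.2]
  have h₂₂ : Y.toBlocks₂₂ = 1 := by
    ext i j
    have hi : (i : ι) = u := not_not.mp i.2
    have hij : i = j := Subtype.ext (hi.trans (not_not.mp j.2).symm)
    subst hij
    simp [Y, toBlocks₂₂, hi]
  rw [← det_submatrix_equiv_self (Equiv.sumCompl (· ≠ u))]
  change Y.det = _
  rw [← fromBlocks_toBlocks Y, h₁₁, h₂₁, h₂₂, det_fromBlocks_zero₂₁, det_one, mul_one]

theorem mul_det_add_ones {D : Matrix ι ι R} {s : R}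
    (hD : D *ᵥ (fun _ => 1) = s • fun _ => 1) :
    s * (D + of fun _ _ => 1).det = (s + Fintype.card ι) * D.det := by
  rcases isEmpty_or_nonempty ι with _ | ⟨⟨j⟩⟩
  · simp
  have hJ : (D + of fun _ _ => 1) *ᵥ (fun _ => 1) = (s + Fintype.card ι) • fun _ => 1 := by
    rw [add_mulVec, hD]; ext; simp [mulVec, dotProduct]
  rw [det_eq_mul_det_updateCol_of_mulVec_one hJ j, det_updateCol_add_ones,
    det_eq_mul_det_updateCol_of_mulVec_one hD j]
  ring

theorem det_add_ones_eq_card_sq_mul_det_submatrix {L : Matrix ι ι R}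
    (hrow : L *ᵥ (fun _ => 1) = 0) (hcol : (fun _ => 1) ᵥ* L = 0) (u : ι) :
    (L + of fun _ _ => 1).det = Fintype.card ι ^ 2 *
      (L.submatrix (↑) (↑) : Matrix {v // v ≠ u} {v // v ≠ u} R).det := by
  have hJ : (L + of fun _ _ => 1) *ᵥ (fun _ => 1) = (Fintype.card ι : R) • fun _ => 1 := by
    rw [add_mulVec, hrow]; ext; simp [mulVec, dotProduct]
  rw [det_eq_mul_det_updateCol_of_mulVec_one hJ u, det_updateCol_add_ones]
  set X := L.updateCol u fun _ => 1
  have hX : ∑ k, (1 : R) • X k = (Fintype.card ι : R) • Pi.single u 1 := by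
    ext j
    rw [Finset.sum_apply]
    by_cases hj : j = u
    · subst hj; simp [X]
    · simpa [X, hj, vecMul, dotProduct] using congrFun hcol j
  have hminor : (X.submatrix (↑) (↑) : Matrix {v // v ≠ u} {v // v ≠ u} R) =
      L.submatrix (↑) (↑) := by
    ext i j
    simp [X, updateCol_ne j.2]
  have h := det_updateRow_sum X u fun _ => 1
  rw [hX, det_updateRow_smul, det_updateRow_single_eq_det_submatrix, hminor, one_smul] at h
  rw [← h]
  ring

end Matrix

theorem Fin.tail_ite_last {R : Type*} (P Q : R) (k : ℕ) :
    Fin.tail (fun i : Fin (k + 1) => if (i : ℕ) + 1 = k + 1 then Q else P) =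
      fun i : Fin k => if (i : ℕ) + 1 = k then Q else P := by
  funext i; simp [Fin.tail]

namespace SimpleGraph

theorem det_lapMatrix_add_ones {V : Type*} [Fintype V] [DecidableEq V] (G : SimpleGraph V)
    [DecidableRel G.Adj] {R : Type*} [CommRing R] (u : V) :
    (G.lapMatrix R + .of fun _ _ => 1).det = Fintype.card V ^ 2 *
      ((G.lapMatrix R).submatrix (↑) (↑) : Matrix {v // v ≠ u} {v // v ≠ u} R).det := by
  refine det_add_ones_eq_card_sq_mul_det_submatrix (G.lapMatrix_mulVec_const_eq_zero) ?_ u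
  rw [← (G.isSymm_lapMatrix (R := R)).eq, vecMul_transpose, lapMatrix_mulVec_const_eq_zero]

theorem lapMatrix_add_smul_one {V : Type*} [Fintype V] [DecidableEq V] (G : SimpleGraph V)
    [DecidableRel G.Adj] {R : Type*} [Ring R] (x : R) :
    G.lapMatrix R + x • 1 = Matrix.diagonal (fun v => x + G.degree v) - G.adjMatrix R := by
  rw [lapMatrix, degMatrix, Matrix.smul_one_eq_diagonal, add_comm, ← add_sub_assoc,
    Matrix.diagonal_add]

theorem lapMatrix_top_add_ones {V : Type*} [Fintype V] [DecidableEq V] (R : Type*) [Ring R] :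
    (⊤ : SimpleGraph V).lapMatrix R + .of (fun _ _ => 1) = (Fintype.card V : R) • 1 := by
  ext i j
  have : 1 ≤ Fintype.card V := Fintype.card_pos_iff.mpr ⟨i⟩
  by_cases hij : i = j
  · subst hij; simp [lapMatrix, degMatrix, Nat.cast_sub this]
  · simp [lapMatrix, degMatrix, hij]

section Join

variable {α β : Type*} (G : SimpleGraph α) (H : SimpleGraph β)

@[simp] theorem graphJoin_adj_inl_inl {a b : α} :
    (graphJoin G H).Adj (.inl a) (.inl b) ↔ G.Adj a b := Iff.rfl

@[simp] theorem graphJoin_adj_inr_inr {a b : β} :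
    (graphJoin G H).Adj (.inr a) (.inr b) ↔ H.Adj a b := Iff.rfl

@[simp] theorem graphJoin_adj_inl_inr {a : α} {b : β} : (graphJoin G H).Adj (.inl a) (.inr b) :=
  trivial

@[simp] theorem graphJoin_adj_inr_inl {a : β} {b : α} : (graphJoin G H).Adj (.inr a) (.inl b) :=
  trivial

variable [Fintype α] [Fintype β] [DecidableRel G.Adj] [DecidableRel H.Adj]

theorem degree_graphJoin_inl (a : α) :
    (graphJoin G H).degree (.inl a) = G.degree a + Fintype.card β := by
  have h : (graphJoin G H).neighborFinset (.inl a) = (G.neighborFinset a).disjSum .univ := by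
    ext (b | b) <;> simp
  rw [← card_neighborFinset_eq_degree, h, Finset.card_disjSum, card_neighborFinset_eq_degree,
    Finset.card_univ]

theorem degree_graphJoin_inr (b : β) :
    (graphJoin G H).degree (.inr b) = H.degree b + Fintype.card α := by
  have h : (graphJoin G H).neighborFinset (.inr b) = Finset.univ.disjSum (H.neighborFinset b) := by
    ext (a | a) <;> simp
  rw [← card_neighborFinset_eq_degree, h, Finset.card_disjSum, card_neighborFinset_eq_degree,
    Finset.card_univ, add_comm]

variable [DecidableEq α] [DecidableEq β] (R : Type*) [Ring R]

theorem lapMatrix_graphJoin_add_ones :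
    (graphJoin G H).lapMatrix R + .of (fun _ _ => 1) =
      Matrix.fromBlocks (G.lapMatrix R + (Fintype.card β : R) • 1 + .of fun _ _ => 1) 0 0
        (H.lapMatrix R + (Fintype.card α : R) • 1 + .of fun _ _ => 1) := by
  ext (a | a) (b | b) <;>
    simp [lapMatrix, degMatrix, Matrix.diagonal_apply, adjMatrix_apply, Matrix.one_apply,
      degree_graphJoin_inl, degree_graphJoin_inr] <;>
    split_ifs <;> simp_all

end Join

theorem pathGraph_degree {n : ℕ} (i : Fin n) :
    (pathGraph n).degree i =
      (if (i : ℕ) + 1 = n then 0 else 1) + (if (i : ℕ) = 0 then 0 else 1) := by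
  rw [← card_neighborFinset_eq_degree, neighborFinset_eq_filter]
  simp only [pathGraph_adj]
  rw [Finset.filter_or,
    Finset.card_union_of_disjoint (Finset.disjoint_filter.mpr fun _ _ _ => by omega)]
  have hi := i.isLt
  congr 1 <;> split_ifs with h
  · exact Finset.card_eq_zero.mpr (Finset.filter_eq_empty_iff.mpr fun j _ => by omega)
  · exact Finset.card_eq_one.mpr ⟨⟨i + 1, by omega⟩, by ext j; simp [Fin.ext_iff]; omega⟩
  · exact Finset.card_eq_zero.mpr (Finset.filter_eq_empty_iff.mpr fun j _ => by omega)
  · exact Finset.card_eq_one.mpr ⟨⟨i - 1, by omega⟩, by ext j; simp [Fin.ext_iff]; omega⟩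

theorem det_diagonal_sub_adjMatrix_pathGraph {R : Type*} [CommRing R] {k : ℕ}
    (d : Fin (k + 2) → R) :
    (diagonal d - (pathGraph (k + 2)).adjMatrix R).det =
      d 0 * (diagonal (Fin.tail d) - (pathGraph (k + 1)).adjMatrix R).det -
        (diagonal (Fin.tail (Fin.tail d)) - (pathGraph k).adjMatrix R).det := by
  set M := diagonal d - (pathGraph (k + 2)).adjMatrix R
  have h₀ : M.submatrix Fin.succ Fin.succ =
      diagonal (Fin.tail d) - (pathGraph (k + 1)).adjMatrix R := by
    ext i j
    simp [M, diagonal_apply, adjMatrix_apply, pathGraph_adj, Fin.tail]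
  -- the `(0, 1)` minor has the single nonzero entry `-1` in its first column
  have h₁ : (M.submatrix Fin.succ (Fin.succAbove 1)).det =
      -(diagonal (Fin.tail (Fin.tail d)) - (pathGraph k).adjMatrix R).det := by
    rw [det_succ_column_zero, Fin.sum_univ_succ, Finset.sum_eq_zero]
    · simp [M, adjMatrix_apply, pathGraph_adj]
      congr 1
      ext i j
      simp [Fin.succAbove_of_le_castSucc, Fin.le_def, diagonal_apply, adjMatrix_apply,
        pathGraph_adj, Fin.tail]
    · intro i _
      simp [M, adjMatrix_apply, pathGraph_adj, Fin.succAbove]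
  have e₀ : M 0 0 = d 0 := by simp [M]
  have e₁ : M 0 1 = -1 := by simp [M, adjMatrix_apply, pathGraph_adj]
  have e₂ : ∀ i : Fin k, M 0 i.succ.succ = 0 := fun i => by
    simp [M, adjMatrix_apply, pathGraph_adj, (Fin.succ_ne_zero _).symm]
  rw [det_succ_row_zero, Fin.sum_univ_succ, Fin.sum_univ_succ, Finset.sum_eq_zero fun i _ => by
    rw [e₂, mul_zero, zero_mul]]
  simp only [Fin.succAbove_zero, Fin.succ_zero_eq_one, h₀, h₁, e₀, e₁, Fin.val_zero,
    Fin.val_one]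
  ring

theorem det_diagonal_ite_last_sub_adjMatrix_pathGraph {R : Type*} [CommRing R] (P : R) (k : ℕ) :
    (diagonal (fun i : Fin k => if (i : ℕ) + 1 = k then P - 1 else P) -
      (pathGraph k).adjMatrix R).det = lucasU P (k + 1) - lucasU P k := by
  induction k using Nat.twoStepInduction with
  | zero => simp [lucasU]
  | one => simp [lucasU, det_unique]
  | more k ih₁ ih₂ =>
    rw [det_diagonal_sub_adjMatrix_pathGraph, Fin.tail_ite_last, Fin.tail_ite_last, ih₁, ih₂]
    simp [lucasU]
    ring

theorem det_lapMatrix_pathGraph_add_smul_one {R : Type*} [CommRing R] (x : R) (k : ℕ) :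
    ((pathGraph (k + 1)).lapMatrix R + x • 1).det = x * lucasU (x + 2) (k + 1) := by
  rw [lapMatrix_add_smul_one]
  cases k with
  | zero => simp [lucasU, det_unique]
  | succ k =>
    have htail : Fin.tail (fun v : Fin (k + 2) => x + ((pathGraph (k + 2)).degree v : R)) =
        fun i : Fin (k + 1) => if (i : ℕ) + 1 = k + 1 then x + 2 - 1 else x + 2 := by
      funext i; simp [Fin.tail, pathGraph_degree]; split_ifs <;> ring
    rw [det_diagonal_sub_adjMatrix_pathGraph, htail, Fin.tail_ite_last,
      det_diagonal_ite_last_sub_adjMatrix_pathGraph, det_diagonal_ite_last_sub_adjMatrix_pathGraph]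
    simp [lucasU, pathGraph_degree]
    ring

theorem det_submatrix_lapMatrix_graphJoin_top_pathGraph (m n : ℕ) (hm : 1 ≤ m) (hn : 1 ≤ n)
    (u : Fin m ⊕ Fin n) :
    (((graphJoin (⊤ : SimpleGraph (Fin m)) (pathGraph n)).lapMatrix ℤ).submatrix (↑) (↑) :
        Matrix {v // v ≠ u} {v // v ≠ u} ℤ).det =
      ((m : ℤ) + n) ^ (m - 1) * lucasU ((m : ℤ) + 2) n := by
  obtain ⟨m, rfl⟩ : ∃ m', m = m' + 1 := ⟨m - 1, by omega⟩
  obtain ⟨k, rfl⟩ : ∃ k, n = k + 1 := ⟨n - 1, by omega⟩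
  set N : ℤ := (m + 1 : ℕ) + (k + 1 : ℕ) with hN
  set D := (pathGraph (k + 1)).lapMatrix ℤ + ((m + 1 : ℕ) : ℤ) • 1
  have hblocks : ((graphJoin (⊤ : SimpleGraph (Fin (m + 1))) (pathGraph (k + 1))).lapMatrix ℤ +
      .of fun _ _ => 1).det = N ^ (m + 1) * (D + .of fun _ _ => 1).det := by
    rw [lapMatrix_graphJoin_add_ones, det_fromBlocks_zero₂₁, add_right_comm,
      lapMatrix_top_add_ones, ← add_smul, det_smul, det_one]
    simp [N, D, add_comm]
  have hD : D *ᵥ (fun _ => 1) = ((m + 1 : ℕ) : ℤ) • fun _ => 1 := by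
    rw [add_mulVec, lapMatrix_mulVec_const_eq_zero, zero_add, smul_mulVec, one_mulVec]
  have hrank1 := mul_det_add_ones hD
  rw [det_lapMatrix_pathGraph_add_smul_one, Fintype.card_fin] at hrank1
  have hDJ : (D + .of fun _ _ => 1).det = N * lucasU (((m + 1 : ℕ) : ℤ) + 2) (k + 1) := by
    apply mul_left_cancel₀ (show ((m + 1 : ℕ) : ℤ) ≠ 0 by positivity)
    rw [hrank1]; ring
  have hkirch := det_lapMatrix_add_ones
    (graphJoin (⊤ : SimpleGraph (Fin (m + 1))) (pathGraph (k + 1))) (R := ℤ) u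
  rw [hblocks, hDJ, Fintype.card_sum, Fintype.card_fin, Fintype.card_fin] at hkirch
  rw [Nat.cast_add (m + 1) (k + 1), ← hN] at hkirch
  apply mul_left_cancel₀ (show N ^ 2 ≠ 0 by positivity)
  rw [Nat.add_sub_cancel]
  linear_combination -hkirch

end SimpleGraph

/-- Theorem 2.3(1): the number of spanning trees of `K_m ∨ P_n` (computed, via the
Matrix-Tree theorem, as the determinant of the Laplacian with one row and the
corresponding column deleted) equals
`(m+n)^{m−1}/(2ⁿ√(m²+4m)) · ((m+2+√(m²+4m))ⁿ − (m+2−√(m²+4m))ⁿ)`. -/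
theorem spanningTreeCount_join_complete_path (m n : ℕ) (hm : 1 ≤ m) (hn : 4 ≤ n)
    (u : Fin m ⊕ Fin n) :
    ((((graphJoin (⊤ : SimpleGraph (Fin m)) (pathGraph n)).lapMatrix ℤ).submatrix
        (fun i : {v : Fin m ⊕ Fin n // v ≠ u} => (i : Fin m ⊕ Fin n))
        (fun j : {v : Fin m ⊕ Fin n // v ≠ u} => (j : Fin m ⊕ Fin n))).det : ℝ) =
      ((m : ℝ) + n) ^ (m - 1) / (2 ^ n * Real.sqrt ((m : ℝ) ^ 2 + 4 * m)) *
        (((m : ℝ) + 2 + Real.sqrt ((m : ℝ) ^ 2 + 4 * m)) ^ n -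
          ((m : ℝ) + 2 - Real.sqrt ((m : ℝ) ^ 2 + 4 * m)) ^ n) := by
  have hdisc : (0 : ℝ) < (m : ℝ) ^ 2 + 4 * m := by positivity
  have hsq : Real.sqrt ((m : ℝ) ^ 2 + 4 * m) ^ 2 = ((m : ℝ) + 2) ^ 2 - 4 := by
    rw [Real.sq_sqrt hdisc.le]; ring
  have hcast : ((lucasU ((m : ℤ) + 2) n : ℤ) : ℝ) = lucasU ((m : ℝ) + 2) n := by
    simpa using map_lucasU (Int.castRingHom ℝ) ((m : ℤ) + 2) n
  rw [SimpleGraph.det_submatrix_lapMatrix_graphJoin_top_pathGraph m n hm (by omega), Int.cast_mul,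
    hcast, ← two_pow_mul_mul_lucasU hsq]
  have : Real.sqrt ((m : ℝ) ^ 2 + 4 * m) ≠ 0 := (Real.sqrt_pos.mpr hdisc).ne'
  push_cast
  field_simp
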